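/- A Sylow 3-subgroup of Sp_4(F_3) has exactly 17 conjugacy classes. -/

import Mathlib

/-!
Write `U` for the upper unitriangular matrices of `Sp₄(𝔽₃)` in the basis order `e₁, e₂, f₂, f₁`.
It is a group of order `81` with `1377` commuting pairs, hence with `1377 / 81 = 17` conjugacy
classes. It is a Sylow subgroup: if a `3`-group `Q` properly contained `U`, the normalizer
condition in `Q` would give `x ∈ Q \ U` normalizing `U`. Such an `x` preserves the flag of
iterated `U`-fixed vectors, so it is upper triangular, and its diagonal entries are
`3`-power roots of unity in `𝔽₃`, hence `1`; so `x ∈ U`.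
-/

open Matrix

section General

variable {n R : Type*} [Fintype n]

theorem MulEquiv.card_conjClasses_eq {G H : Type*} [Monoid G] [Monoid H] (e : G ≃* H) :
    Nat.card (ConjClasses G) = Nat.card (ConjClasses H) :=
  Nat.card_congr
    { toFun := ConjClasses.map e.toMonoidHom
      invFun := ConjClasses.map e.symm.toMonoidHom
      left_inv := fun c =>
        Quotient.inductionOn c fun g => congrArg ConjClasses.mk (e.symm_apply_apply g)
      right_inv := fun c =>
        Quotient.inductionOn c fun h => congrArg ConjClasses.mk (e.apply_symm_apply h) }

theorem IsPGroup.eq_of_le_of_forall_mem_normalizer {G : Type*} [Group G] [Finite G] {p : ℕ}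
    [Fact p.Prime] {H Q : Subgroup G} (hQ : IsPGroup p Q) (hHQ : H ≤ Q)
    (hN : ∀ g ∈ Subgroup.normalizer (H : Set G), (∃ k, g ^ p ^ k = 1) → g ∈ H) : Q = H := by
  refine le_antisymm ?_ hHQ
  by_contra hQH
  have : Group.IsNilpotent Q := hQ.isNilpotent
  have hlt : H.subgroupOf Q < ⊤ :=
    lt_top_iff_ne_top.2 fun h => hQH (Subgroup.subgroupOf_eq_top.mp h)
  obtain ⟨x, hxN, hxH⟩ := SetLike.exists_of_lt (Group.normalizerCondition_of_isNilpotent _ hlt)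
  rw [← Subgroup.subgroupOf_normalizer_eq hHQ, Subgroup.mem_subgroupOf] at hxN
  obtain ⟨k, hk⟩ := hQ x
  exact hxH (Subgroup.mem_subgroupOf.2 (hN x hxN ⟨k, by exact_mod_cast congrArg Subtype.val hk⟩))

theorem Matrix.BlockTriangular.mul_apply_self [Semiring R] {α : Type*} [LinearOrder α]
    {b : n → α} {M N : Matrix n n R} (hM : M.BlockTriangular b) (hN : N.BlockTriangular b)
    (hb : Function.Injective b) (i : n) : (M * N) i i = M i i * N i i := by
  rw [mul_apply, Finset.sum_eq_single i (fun j _ hji => ?_) (by simp)]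
  rcases lt_trichotomy (b j) (b i) with h | h | h
  · rw [hM h, zero_mul]
  · exact absurd (hb h) hji
  · rw [hN h, mul_zero]

theorem Matrix.BlockTriangular.pow_apply_self [Semiring R] [DecidableEq n] {α : Type*}
    [LinearOrder α] {b : n → α} {M : Matrix n n R} (hM : M.BlockTriangular b)
    (hb : Function.Injective b) (m : ℕ) (i : n) : (M ^ m) i i = M i i ^ m := by
  induction m with
  | zero => simp
  | succ m ih => rw [pow_succ, (hM.pow m).mul_apply_self hM hb, ih, pow_succ]

theorem Matrix.blockTriangular_of_forall_mulVec [Semiring R] [DecidableEq n] {r : n → ℕ}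
    {X : Matrix n n R}
    (h : ∀ k, ∀ v : n → R, (∀ i, k ≤ r i → v i = 0) → ∀ i, k ≤ r i → (X *ᵥ v) i = 0) :
    X.BlockTriangular r := by
  intro i j hji
  have := h (r j + 1) (Pi.single j 1)
    (fun i' hi' => Pi.single_eq_of_ne (by rintro rfl; omega) _) i hji
  simpa [mulVec_single_one] using this

variable [Ring R]

def Matrix.fixedFlag (S : Set (Matrix n n R)) : ℕ → Set (n → R)
  | 0 => {0}
  | k + 1 => {v | ∀ s ∈ S, s *ᵥ v - v ∈ fixedFlag S k}

theorem Matrix.mulVec_mem_fixedFlag {S : Set (Matrix n n R)} {X : Matrix n n R}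
    (hX : ∀ s ∈ S, ∃ t ∈ S, s * X = X * t) : ∀ k, ∀ v ∈ fixedFlag S k, X *ᵥ v ∈ fixedFlag S k
  | 0, v, hv => by simp_all [fixedFlag]
  | k + 1, v, hv => fun s hs => by
    obtain ⟨t, ht, hst⟩ := hX s hs
    rw [mulVec_mulVec, hst, ← mulVec_mulVec, ← mulVec_sub]
    exact mulVec_mem_fixedFlag hX k _ (hv t ht)

end General

namespace Sp4ZMod3

abbrev Sp := symplecticGroup (Fin 2) (ZMod 3)

/-- Coordinates on `U`: `toMatrix` below is the embedding, and the multiplication is the one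
making it multiplicative. -/
@[ext]
structure Unipotent where
  a : ZMod 3
  b : ZMod 3
  c : ZMod 3
  d : ZMod 3
  deriving DecidableEq, Fintype

namespace Unipotent

instance : One Unipotent := ⟨⟨0, 0, 0, 0⟩⟩

instance : Mul Unipotent :=
  ⟨fun x y => ⟨x.a + y.a, x.b + y.b + x.a * y.d,
    x.c + y.c + x.a * y.b - x.a * y.a * y.d - x.b * y.a, x.d + y.d⟩⟩

instance : Inv Unipotent := ⟨fun x => ⟨-x.a, -x.b + x.a * x.d, -x.c, -x.d⟩⟩

theorem mul_def (x y : Unipotent) : x * y = ⟨x.a + y.a, x.b + y.b + x.a * y.d,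
    x.c + y.c + x.a * y.b - x.a * y.a * y.d - x.b * y.a, x.d + y.d⟩ := rfl

theorem one_def : (1 : Unipotent) = ⟨0, 0, 0, 0⟩ := rfl

theorem inv_def (x : Unipotent) : x⁻¹ = ⟨-x.a, -x.b + x.a * x.d, -x.c, -x.d⟩ := rfl

instance : Group Unipotent where
  mul_assoc x y z := by ext <;> simp only [mul_def] <;> ring
  one_mul x := by ext <;> simp [mul_def, one_def]
  mul_one x := by ext <;> simp [mul_def, one_def]
  inv_mul_cancel x := by ext <;> simp only [mul_def, one_def, inv_def] <;> ring

instance : DecidableRel (Commute : Unipotent → Unipotent → Prop) :=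
  fun x y => decidable_of_iff (x * y = y * x) Iff.rfl

theorem card_eq : Nat.card Unipotent = 3 ^ 4 := by
  rw [Nat.card_eq_fintype_card]; decide +kernel

theorem card_commute : Nat.card {p : Unipotent × Unipotent // Commute p.1 p.2} = 1377 := by
  rw [Nat.card_eq_fintype_card]; decide +kernel

theorem card_conjClasses : Nat.card (ConjClasses Unipotent) = 17 := by
  have h := card_comm_eq_card_conjClasses_mul_card Unipotent
  rw [card_commute, card_eq] at h
  omega

end Unipotent

def toMatrix (g : Unipotent) : Matrix (Fin 2 ⊕ Fin 2) (Fin 2 ⊕ Fin 2) (ZMod 3) :=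
  fromBlocks !![1, g.a; 0, 1] !![g.c, g.b; g.b - g.a * g.d, g.d] 0 !![1, 0; -g.a, 1]

theorem toMatrix_mem (g : Unipotent) : toMatrix g ∈ Sp := by
  rw [SymplecticGroup.mem_iff]
  ext (i | i) (j | j) <;> fin_cases i <;> fin_cases j <;>
    simp [toMatrix, J, mul_apply, Fintype.sum_sum_type, Fin.sum_univ_two, fromBlocks] <;> ring

theorem toMatrix_mul (g h : Unipotent) : toMatrix (g * h) = toMatrix g * toMatrix h := by
  ext (i | i) (j | j) <;> fin_cases i <;> fin_cases j <;>
    simp [toMatrix, Unipotent.mul_def, mul_apply, Fintype.sum_sum_type, Fin.sum_univ_two,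
      fromBlocks] <;> ring

theorem toMatrix_one : toMatrix 1 = 1 := by
  ext (i | i) (j | j) <;> fin_cases i <;> fin_cases j <;>
    simp [toMatrix, Unipotent.one_def, fromBlocks, one_apply]

theorem toMatrix_injective : Function.Injective toMatrix := by
  intro g h hgh
  have entry i j : toMatrix g i j = toMatrix h i j := by rw [hgh]
  ext
  · simpa [toMatrix] using entry (.inl 0) (.inl 1)
  · simpa [toMatrix] using entry (.inl 0) (.inr 1)
  · simpa [toMatrix] using entry (.inl 0) (.inr 0)
  · simpa [toMatrix] using entry (.inl 1) (.inr 1)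

def toSp : Unipotent →* Sp where
  toFun g := ⟨toMatrix g, toMatrix_mem g⟩
  map_one' := Subtype.ext toMatrix_one
  map_mul' g h := Subtype.ext (toMatrix_mul g h)

theorem toSp_injective : Function.Injective toSp :=
  fun _ _ h => toMatrix_injective (congrArg Subtype.val h)

/-- Position of a basis vector in the order `e₁, e₂, f₂, f₁`, in which the matrices `toMatrix g`
are upper unitriangular. -/
def level : Fin 2 ⊕ Fin 2 → ℕ := Sum.elim (fun i => i) (fun i => 3 - i)

theorem level_injective : Function.Injective level := by decide

theorem level_le_three (i : Fin 2 ⊕ Fin 2) : level i ≤ 3 := by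
  rcases i with i | i <;> fin_cases i <;> decide

theorem forall_toMatrix_mulVec_sub_iff : ∀ k ≤ 3, ∀ v : Fin 2 ⊕ Fin 2 → ZMod 3,
    (∀ g, ∀ i, k ≤ level i → (toMatrix g *ᵥ v - v) i = 0) ↔ ∀ i, k + 1 ≤ level i → v i = 0 := by
  decide +kernel

theorem mem_fixedFlag_range_toMatrix (k : ℕ) (v : Fin 2 ⊕ Fin 2 → ZMod 3) :
    v ∈ fixedFlag (Set.range toMatrix) k ↔ ∀ i, k ≤ level i → v i = 0 := by
  induction k generalizing v with
  | zero => simp [fixedFlag, funext_iff]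
  | succ k ih =>
    simp only [fixedFlag, Set.mem_ofPred_eq, Set.forall_mem_range, ih]
    by_cases hk : k ≤ 3
    · exact forall_toMatrix_mulVec_sub_iff k hk v
    · constructor
      · intro _ i hi; exact absurd (level_le_three i) (by omega)
      · intro _ g i hi; exact absurd (level_le_three i) (by omega)

theorem exists_toMatrix_eq {X : Matrix (Fin 2 ⊕ Fin 2) (Fin 2 ⊕ Fin 2) (ZMod 3)}
    (hX : X ∈ Sp) (htri : X.BlockTriangular level)
    (hdiag : ∀ i, X i i = 1) : ∃ g, toMatrix g = X := by
  have hzero : ∀ {i j}, level j < level i → X i j = 0 := fun h => htri h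
  -- Of the six entries above the diagonal, the symplectic condition leaves four free.
  have hsymp := congrFun₂ (SymplecticGroup.mem_iff.mp hX)
  have e₁ := hsymp (.inr 1) (.inl 0)
  have e₂ := hsymp (.inl 0) (.inl 1)
  simp (disch := decide) only [J, fromBlocks, mul_apply, of_apply, Fintype.sum_sum_type,
    Sum.elim_inl, Sum.elim_inr, Fin.sum_univ_two, hzero, hdiag, transpose_apply, one_apply_eq,
    one_apply_ne, Matrix.zero_apply, Matrix.neg_apply, Finset.sum_const_zero, zero_mul, mul_zero,
    one_mul, mul_one, add_zero, zero_add, mul_neg, neg_mul, neg_zero] at e₁ e₂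
  refine ⟨⟨X (.inl 0) (.inl 1), X (.inl 0) (.inr 1), X (.inl 0) (.inr 0), X (.inl 1) (.inr 1)⟩, ?_⟩
  ext (i | i) (j | j) <;> fin_cases i <;> fin_cases j <;>
    simp (disch := decide) [toMatrix, fromBlocks, hzero, hdiag]
  · linear_combination e₂
  · linear_combination -e₁

theorem mem_range_toSp_of_mem_normalizer {x : Sp}
    (hx : x ∈ Subgroup.normalizer (toSp.range : Set Sp)) {k : ℕ} (hk : x ^ 3 ^ k = 1) :
    x ∈ toSp.range := by
  have hconj : ∀ s ∈ Set.range toMatrix, ∃ t ∈ Set.range toMatrix, s * x = x * t := by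
    rintro _ ⟨g, rfl⟩
    obtain ⟨g', hg'⟩ := (Subgroup.mem_normalizer_iff''.mp hx (toSp g)).mp ⟨g, rfl⟩
    refine ⟨toMatrix g', ⟨g', rfl⟩, ?_⟩
    have : toSp g * x = x * toSp g' := by rw [hg']; group
    exact congrArg Subtype.val this
  have htri : (x : Matrix _ _ (ZMod 3)).BlockTriangular level :=
    blockTriangular_of_forall_mulVec fun k v hv =>
      (mem_fixedFlag_range_toMatrix k _).mp
        (mulVec_mem_fixedFlag hconj k v ((mem_fixedFlag_range_toMatrix k v).mpr hv))
  have hdiag : ∀ i, (x : Matrix _ _ (ZMod 3)) i i = 1 := fun i =>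
    calc (x : Matrix _ _ (ZMod 3)) i i = (x : Matrix _ _ (ZMod 3)) i i ^ 3 ^ k :=
          (ZMod.pow_card_pow _).symm
      _ = ((x ^ 3 ^ k : Sp) : Matrix _ _ (ZMod 3)) i i :=
          (htri.pow_apply_self level_injective _ i).symm
      _ = 1 := by simp [hk]
  obtain ⟨g, hg⟩ := exists_toMatrix_eq x.2 htri hdiag
  exact ⟨g, Subtype.ext hg⟩

def sylow : Sylow 3 Sp where
  toSubgroup := toSp.range
  isPGroup' := IsPGroup.of_card (n := 4) <| by
    rw [← Unipotent.card_eq]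
    exact (Nat.card_congr (MonoidHom.ofInjective toSp_injective).toEquiv).symm
  is_maximal' hQ hle := hQ.eq_of_le_of_forall_mem_normalizer hle
    fun _ hx ⟨_, hk⟩ => mem_range_toSp_of_mem_normalizer hx hk

end Sp4ZMod3

/-- A Sylow 3-subgroup of `Sp₄(F_3)` has exactly 17 conjugacy classes. -/
theorem stmt_11 (P : Sylow 3 (Matrix.symplecticGroup (Fin 2) (ZMod 3))) :
    Nat.card (ConjClasses (P : Subgroup (Matrix.symplecticGroup (Fin 2) (ZMod 3)))) = 17 := by
  have : Finite (Sylow 3 Sp4ZMod3.Sp) := Sp4ZMod3.sylow.finite_of_finiteIndex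
  rw [← Sp4ZMod3.Unipotent.card_conjClasses,
    (P.equiv Sp4ZMod3.sylow).card_conjClasses_eq]
  exact (MonoidHom.ofInjective Sp4ZMod3.toSp_injective).card_conjClasses_eq.symm
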